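/- Let G = (V,E) be a finite simple graph and u ∈ V such that N̄[u] = {u} ∪ {v ≠ u : {u,v} ∉ E} is an independent set, and let C be a minimum proper coloring (optimal partition into independent sets) of G[N(u)]. Then C together with the additional color class N̄[u] forms a minimum proper coloring of G. -/

import Mathlib

/-!
A vertex `u` splits `V` into its neighbourhood `N(u)` and the complement `N̄[u]`. If `N̄[u]` is
independent, one extra colour on `N̄[u]` extends any colouring of `G[N(u)]`, so
`χ(G) ≤ χ(G[N(u)]) + 1`. Conversely, in any colouring of `G` the colour of `u` is missing on
`N(u)`, so `χ(G[N(u)]) + 1 ≤ χ(G)` holds for every graph.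
-/

open Set

namespace SimpleGraph

variable {V : Type*} {G : SimpleGraph V} {n : ℕ}

lemma insert_setOf_not_adj_eq_compl_neighborSet (G : SimpleGraph V) (u : V) :
    insert u {v : V | v ≠ u ∧ ¬ G.Adj u v} = (G.neighborSet u)ᶜ := by
  ext v
  by_cases h : v = u <;> simp [h]

lemma Colorable.of_induce_of_isIndepSet_compl {s : Set V} (hs : G.IsIndepSet sᶜ)
    (h : (G.induce s).Colorable n) : G.Colorable (n + 1) := by
  classical
  obtain ⟨C⟩ := h
  let D : G.Coloring (Option (Fin n)) :=
    Coloring.mk (fun v => if hv : v ∈ s then some (C ⟨v, hv⟩) else none) fun {v w} hvw => by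
      by_cases hv : v ∈ s <;> by_cases hw : w ∈ s <;> simp only [hv, hw, dif_pos]
      · exact fun hC => C.valid (v := ⟨v, hv⟩) (w := ⟨w, hw⟩) hvw (Option.some_injective _ hC)
      · simp
      · simp
      · exact absurd hvw (hs hv hw (G.ne_of_adj hvw))
  simpa using D.colorable

lemma Colorable.induce_neighborSet (h : G.Colorable (n + 1)) (u : V) :
    (G.induce (G.neighborSet u)).Colorable n := by
  classical
  obtain ⟨C⟩ := h
  let D : (G.induce (G.neighborSet u)).Coloring {c // c ≠ C u} :=
    Coloring.mk (fun v => ⟨C v, C.valid (G.adj_symm v.2)⟩) fun hvw hC =>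
      C.valid hvw (congrArg Subtype.val hC)
  simpa [Fintype.card_subtype_compl] using D.colorable

lemma chromaticNumber_le_chromaticNumber_induce_add_one {s : Set V} (hs : G.IsIndepSet sᶜ) :
    G.chromaticNumber ≤ (G.induce s).chromaticNumber + 1 := by
  by_cases htop : (G.induce s).chromaticNumber = ⊤
  · simp [htop]
  rw [← ENat.natCast_toNat htop]
  exact_mod_cast ((colorable_of_chromaticNumber_ne_top htop).of_induce_of_isIndepSet_compl
    hs).chromaticNumber_le

lemma chromaticNumber_induce_neighborSet_add_one_le (u : V) :
    (G.induce (G.neighborSet u)).chromaticNumber + 1 ≤ G.chromaticNumber := by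
  by_cases htop : G.chromaticNumber = ⊤
  · simp [htop]
  have hm := colorable_of_chromaticNumber_ne_top htop
  rw [← ENat.natCast_toNat htop]
  cases h : G.chromaticNumber.toNat with
  | zero => exact ((colorable_zero_iff.1 (h ▸ hm)).false u).elim
  | succ m => exact_mod_cast add_le_add_left ((h ▸ hm).induce_neighborSet u).chromaticNumber_le 1

lemma chromaticNumber_eq_chromaticNumber_induce_neighborSet_add_one {u : V}
    (hu : G.IsIndepSet (G.neighborSet u)ᶜ) :
    G.chromaticNumber = (G.induce (G.neighborSet u)).chromaticNumber + 1 :=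
  (chromaticNumber_le_chromaticNumber_induce_add_one hu).antisymm
    (chromaticNumber_induce_neighborSet_add_one_le u)

end SimpleGraph

open SimpleGraph

theorem stmt_8 {V : Type*} [Fintype V] (G : SimpleGraph V) (u : V)
    (hbar : (insert u {v : V | v ≠ u ∧ ¬ G.Adj u v}).Pairwise fun a b => ¬ G.Adj a b)
    (𝒞 : Set (Set V))
    (hcover : ⋃₀ 𝒞 = G.neighborSet u)
    (hdisj : 𝒞.PairwiseDisjoint id)
    (hind : ∀ I ∈ 𝒞, I.Pairwise fun a b => ¬ G.Adj a b)
    (hmin : (𝒞.ncard : ℕ∞) = (G.induce (G.neighborSet u)).chromaticNumber) :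
    ⋃₀ (insert (insert u {v : V | v ≠ u ∧ ¬ G.Adj u v}) 𝒞) = Set.univ ∧
    (insert (insert u {v : V | v ≠ u ∧ ¬ G.Adj u v}) 𝒞).PairwiseDisjoint id ∧
    (∀ I ∈ insert (insert u {v : V | v ≠ u ∧ ¬ G.Adj u v}) 𝒞,
      I.Pairwise fun a b => ¬ G.Adj a b) ∧
    ((insert (insert u {v : V | v ≠ u ∧ ¬ G.Adj u v}) 𝒞).ncard : ℕ∞) =
      G.chromaticNumber := by
  rw [insert_setOf_not_adj_eq_compl_neighborSet] at hbar ⊢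
  have hsub : ∀ I ∈ 𝒞, I ⊆ G.neighborSet u := fun I hI => hcover ▸ subset_sUnion_of_mem hI
  have hnotMem : (G.neighborSet u)ᶜ ∉ 𝒞 := fun h =>
    G.notMem_neighborSet_self (hsub _ h G.notMem_neighborSet_self)
  refine ⟨by rw [sUnion_insert, hcover, compl_union_self], ?_, ?_, ?_⟩
  · exact hdisj.insert fun I hI _ => disjoint_compl_left_iff_subset.2 (hsub I hI)
  · exact forall_mem_insert.2 ⟨hbar, hind⟩
  · rw [ncard_insert_of_notMem hnotMem,
      chromaticNumber_eq_chromaticNumber_induce_neighborSet_add_one hbar, ← hmin]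
    norm_cast
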